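/- If σ is an unrestrictive permutation, then F_n(123, σ) = F_n(123) for all n ≥ 0; in particular |F_n(123, σ)| = 2^{n−1} for all n ≥ 1. -/

import Mathlib

/-- Two lists of naturals have the same length and the same relative order
(including ties). -/
def SameRelOrder (u v : List ℕ) : Prop :=
  u.length = v.length ∧
    ∀ i j, i < u.length → j < u.length →
      (u.getD i 0 < u.getD j 0 ↔ v.getD i 0 < v.getD j 0)

/-- `α` contains `β` as a pattern: some subsequence of `α` has the same length
and relative order as `β`. -/
def SeqContains (α β : List ℕ) : Prop :=
  ∃ γ : List ℕ, γ.Sublist α ∧ SameRelOrder γ β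

/-- A copy of the Fishburn pattern `f` in `l`: indices `j`, `k` with `j + 1 < k`,
`l j = l k + 1` and `l (j+1) > l j`. -/
def HasFishburnCopy (l : List ℕ) : Prop :=
  ∃ j k, j + 1 < k ∧ k < l.length ∧
    l.getD j 0 = l.getD k 0 + 1 ∧ l.getD j 0 < l.getD (j + 1) 0

/-- A Fishburn permutation contains no copy of the Fishburn pattern `f`. -/
def FishburnFree (l : List ℕ) : Prop := ¬ HasFishburnCopy l

/-- `l` is a permutation of `1, …, n`, written in one-line notation. -/
def IsPermList (n : ℕ) (l : List ℕ) : Prop := l.Perm (List.range' 1 n)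

/-- The set of Fishburn permutations of length `n` avoiding each pattern in `pats`. -/
def FishburnSet (n : ℕ) (pats : List (List ℕ)) : Set (List ℕ) :=
  {l | IsPermList n l ∧ FishburnFree l ∧ ∀ p ∈ pats, ¬ SeqContains l p}

/-- The set of all permutations of length `n` avoiding each pattern in `pats`. -/
def PermSet (n : ℕ) (pats : List (List ℕ)) : Set (List ℕ) :=
  {l | IsPermList n l ∧ ∀ p ∈ pats, ¬ SeqContains l p}

/-- The number of ascents of a sequence. -/
def ascCount (l : List ℕ) : ℕ :=
  ((Finset.range l.length).filter
    (fun i => i + 1 < l.length ∧ l.getD i 0 < l.getD (i + 1) 0)).card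

/-- `l` is an ascent sequence. -/
def IsAscentSeq (l : List ℕ) : Prop :=
  (0 < l.length → l.getD 0 0 = 0) ∧
    ∀ j, 0 < j → j < l.length → l.getD j 0 ≤ 1 + ascCount (l.take j)

/-- The set of ascent sequences of length `n` avoiding each pattern in `pats`. -/
def AscentSeqSet (n : ℕ) (pats : List (List ℕ)) : Set (List ℕ) :=
  {l | l.length = n ∧ IsAscentSeq l ∧ ∀ p ∈ pats, ¬ SeqContains l p}

/-- A permutation is unrestrictive if it avoids 123, contains a copy of the
Fishburn pattern `f`, and contains at least one of 2413 and 3412. -/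
def Unrestrictive (σ : List ℕ) : Prop :=
  ¬ SeqContains σ [1, 2, 3] ∧ HasFishburnCopy σ ∧
    (SeqContains σ [2, 4, 1, 3] ∨ SeqContains σ [3, 4, 1, 2])

/-- A permutation is restrictive if it avoids 123, contains a copy of the
Fishburn pattern `f`, and avoids both 2413 and 3412. -/
def Restrictive (σ : List ℕ) : Prop :=
  ¬ SeqContains σ [1, 2, 3] ∧ HasFishburnCopy σ ∧
    ¬ SeqContains σ [2, 4, 1, 3] ∧ ¬ SeqContains σ [3, 4, 1, 2]

/-!
A Fishburn permutation avoiding 123 has every ascent starting at the entry 1: if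
`π i < π (i+1)` with `π i ≥ 2`, then the entry `π i - 1` lies either to the left of `π i`,
giving a copy of 123, or to the right of `π (i+1)`, giving a copy of `f`. Conversely such a
permutation is Fishburn and avoids 123. It is a decreasing run, then 1, then a decreasing run,
so it is determined by the set of entries preceding 1, any subset of `{2, …, n}`.

Since between two rises `π p < π q` and `π r < π s` at positions `p < q ≤ r < s` there are
ascents in `[p, q)` and in `[r, s)`, both starting at the single entry 1, no such permutation
has two disjoint rises. Both 2413 and 3412 have two disjoint rises, hence so does every
unrestrictive `σ`, and `σ` is avoided automatically.
-/

theorem isPermList_iff {n : ℕ} {l : List ℕ} :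
    IsPermList n l ↔ l.Nodup ∧ ∀ x, x ∈ l ↔ 1 ≤ x ∧ x ≤ n := by
  have hnd : (List.range' 1 n).Nodup := List.nodup_range'
  constructor
  · intro h
    refine ⟨h.nodup_iff.mpr hnd, fun x => ?_⟩
    rw [h.mem_iff, List.mem_range'_1]
    omega
  · rintro ⟨hl, hmem⟩
    refine (List.perm_ext_iff_of_nodup hl hnd).mpr fun x => ?_
    rw [hmem, List.mem_range'_1]
    omega

theorem IsPermList.mem_iff {n : ℕ} {l : List ℕ} (h : IsPermList n l) {x : ℕ} :
    x ∈ l ↔ 1 ≤ x ∧ x ≤ n :=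
  (isPermList_iff.mp h).2 x

theorem IsPermList.nodup {n : ℕ} {l : List ℕ} (h : IsPermList n l) : l.Nodup :=
  (isPermList_iff.mp h).1

def HasDisjointRises (l : List ℕ) : Prop :=
  ∃ p q r s, p < q ∧ q ≤ r ∧ r < s ∧ s < l.length ∧
    l.getD p 0 < l.getD q 0 ∧ l.getD r 0 < l.getD s 0

theorem HasDisjointRises.of_sublist {u l : List ℕ} (hul : u.Sublist l)
    (hu : HasDisjointRises u) : HasDisjointRises l := by
  obtain ⟨f, hf⟩ := List.sublist_iff_exists_orderEmbedding_getElem?_eq.mp hul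
  have hgetD : ∀ i, u.getD i 0 = l.getD (f i) 0 := fun i => by
    simp only [List.getD_eq_getElem?_getD, hf]
  obtain ⟨p, q, r, s, hpq, hqr, hrs, hs, hpq', hrs'⟩ := hu
  have hfs : f s < l.length := by
    have := hf s
    rw [List.getElem?_eq_getElem hs] at this
    exact (List.getElem?_eq_some_iff.mp this.symm).1
  exact ⟨f p, f q, f r, f s, f.lt_iff_lt.mpr hpq, f.le_iff_le.mpr hqr, f.lt_iff_lt.mpr hrs, hfs,
    by rwa [← hgetD, ← hgetD], by rwa [← hgetD, ← hgetD]⟩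

theorem HasDisjointRises.of_sameRelOrder {u v : List ℕ} (h : SameRelOrder u v)
    (hv : HasDisjointRises v) : HasDisjointRises u := by
  obtain ⟨hlen, hord⟩ := h
  obtain ⟨p, q, r, s, hpq, hqr, hrs, hs, hpq', hrs'⟩ := hv
  exact ⟨p, q, r, s, hpq, hqr, hrs, by omega,
    (hord p q (by omega) (by omega)).mpr hpq', (hord r s (by omega) (by omega)).mpr hrs'⟩

theorem SeqContains.hasDisjointRises {l ρ : List ℕ} (h : SeqContains l ρ)
    (hρ : HasDisjointRises ρ) : HasDisjointRises l := by
  obtain ⟨γ, hγl, hγρ⟩ := h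
  exact (hρ.of_sameRelOrder hγρ).of_sublist hγl

theorem exists_ascent_of_getD_lt {l : List ℕ} {p q : ℕ} (hpq : p < q) (hq : q < l.length)
    (hlt : l.getD p 0 < l.getD q 0) :
    ∃ i, p ≤ i ∧ i < q ∧ l.getD i 0 < l.getD (i + 1) 0 := by
  induction q, hpq using Nat.le_induction with
  | base => exact ⟨p, le_rfl, p.lt_succ_self, hlt⟩
  | succ q hpq ih =>
    by_cases hq' : l.getD q 0 < l.getD (q + 1) 0
    · exact ⟨q, by omega, q.lt_succ_self, hq'⟩
    · obtain ⟨i, hpi, hiq, hi⟩ := ih (by omega) (by omega)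
      exact ⟨i, hpi, by omega, hi⟩

def AscentsStartAtOne (l : List ℕ) : Prop :=
  l.IsChain (fun a b => a < b → a = 1)

theorem AscentsStartAtOne.getD_eq_one {l : List ℕ} (h : AscentsStartAtOne l) {i : ℕ}
    (hi : i + 1 < l.length) (hlt : l.getD i 0 < l.getD (i + 1) 0) : l.getD i 0 = 1 := by
  rw [List.getD_eq_getElem _ _ (by omega), List.getD_eq_getElem _ _ hi] at hlt
  rw [List.getD_eq_getElem _ _ (by omega)]
  exact List.isChain_iff_getElem.mp h i hi hlt

theorem AscentsStartAtOne.not_hasDisjointRises {l : List ℕ} (h : AscentsStartAtOne l)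
    (hl : l.Nodup) : ¬ HasDisjointRises l := by
  rintro ⟨p, q, r, s, hpq, hqr, hrs, hs, hpq', hrs'⟩
  obtain ⟨i, -, hiq, hi⟩ := exists_ascent_of_getD_lt hpq (by omega) hpq'
  obtain ⟨j, hrj, hjs, hj⟩ := exists_ascent_of_getD_lt hrs hs hrs'
  have hij : l.getD i 0 = l.getD j 0 := by
    rw [h.getD_eq_one (by omega) hi, h.getD_eq_one (by omega) hj]
  rw [List.getD_eq_getElem _ _ (by omega), List.getD_eq_getElem _ _ (by omega),
    hl.getElem_inj_iff] at hij
  omega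

theorem seqContains_123_of_getElem_lt {l : List ℕ} {i j k : ℕ} (hij : i < j) (hjk : j < k)
    (hk : k < l.length) (h₁ : l[i] < l[j]) (h₂ : l[j] < l[k]) : SeqContains l [1, 2, 3] := by
  refine ⟨[l[i], l[j], l[k]], ?_, rfl, ?_⟩
  · simpa using List.map_getElem_sublist (l := l)
      (is := [⟨i, by omega⟩, ⟨j, by omega⟩, ⟨k, hk⟩]) (by simp [Fin.mk_lt_mk]; omega)
  · intro a b ha hb
    simp only [List.length_cons, List.length_nil] at ha hb
    interval_cases a <;> interval_cases b <;> simp <;> omega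

theorem hasDisjointRises_123 : HasDisjointRises [1, 2, 3] := ⟨0, 1, 1, 2, by decide⟩

theorem ascentsStartAtOne_of_fishburnFree {n : ℕ} {π : List ℕ} (hπ : IsPermList n π)
    (hf : FishburnFree π) (h123 : ¬ SeqContains π [1, 2, 3]) : AscentsStartAtOne π := by
  refine List.isChain_iff_getElem.mpr fun i hi hlt => ?_
  by_contra hne
  have hpos := hπ.mem_iff.mp (List.getElem_mem (by omega : i < π.length))
  obtain ⟨k, hk, hkv⟩ := List.mem_iff_getElem.mp (hπ.mem_iff.mpr (by omega : 1 ≤ π[i] - 1 ∧ _))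
  have hki : π[k] < π[i] := by omega
  rcases lt_trichotomy k i with hk_lt | rfl | hk_gt
  · exact h123 (seqContains_123_of_getElem_lt hk_lt i.lt_succ_self hi hki hlt)
  · omega
  · have hk' : k ≠ i + 1 := by rintro rfl; omega
    refine hf ⟨i, k, by omega, hk, ?_, ?_⟩ <;>
      simp only [List.getD_eq_getElem _ _ hk, List.getD_eq_getElem _ _ hi,
        List.getD_eq_getElem _ _ (by omega : i < π.length)] <;> omega

theorem mem_fishburnSet_123_iff {n : ℕ} {π : List ℕ} :
    π ∈ FishburnSet n [[1, 2, 3]] ↔ IsPermList n π ∧ AscentsStartAtOne π := by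
  constructor
  · rintro ⟨hπ, hf, hpats⟩
    exact ⟨hπ, ascentsStartAtOne_of_fishburnFree hπ hf (hpats _ (List.mem_singleton_self _))⟩
  · rintro ⟨hπ, hasc⟩
    refine ⟨hπ, ?_, ?_⟩
    · rintro ⟨j, k, hjk, hk, hjk', hj⟩
      have := hπ.mem_iff.mp (List.getElem_mem hk)
      rw [hasc.getD_eq_one (by omega) hj, List.getD_eq_getElem _ _ hk] at hjk'
      omega
    · simp only [List.mem_singleton, forall_eq]
      exact fun h => hasc.not_hasDisjointRises hπ.nodup (h.hasDisjointRises hasDisjointRises_123)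

theorem fishburnSet_append_singleton (n : ℕ) (pats : List (List ℕ)) (σ : List ℕ) :
    FishburnSet n (pats ++ [σ]) = FishburnSet n pats ∩ {π | ¬ SeqContains π σ} := by
  ext π
  simp [FishburnSet, or_imp, forall_and, and_assoc]

theorem fishburnSet_123_eq_of_hasDisjointRises {σ : List ℕ} (hσ : HasDisjointRises σ) (n : ℕ) :
    FishburnSet n [[1, 2, 3], σ] = FishburnSet n [[1, 2, 3]] :=
  (fishburnSet_append_singleton n [[1, 2, 3]] σ).trans <| Set.inter_eq_left.mpr fun π hπ hσπ => by
    obtain ⟨hperm, hasc⟩ := mem_fishburnSet_123_iff.mp hπ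
    exact hasc.not_hasDisjointRises hperm.nodup (hσπ.hasDisjointRises hσ)

theorem Unrestrictive.hasDisjointRises {σ : List ℕ} (hu : Unrestrictive σ) :
    HasDisjointRises σ :=
  hu.2.2.elim (·.hasDisjointRises ⟨0, 1, 2, 3, by decide⟩)
    (·.hasDisjointRises ⟨0, 1, 2, 3, by decide⟩)

theorem AscentsStartAtOne.sortedGT {l : List ℕ} (h : AscentsStartAtOne l) (hl : l.Nodup)
    (h1 : 1 ∉ l) : l.SortedGT := by
  refine List.sortedGT_iff_isChain.mpr (List.isChain_iff_getElem.mpr fun i hi => ?_)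
  have hne : l[i] ≠ l[i + 1] := by rw [Ne, hl.getElem_inj_iff]; omega
  have hi1 : l[i] ≠ 1 := fun h => h1 (h ▸ List.getElem_mem _)
  exact lt_of_le_of_ne (not_lt.mp fun h' => hi1 (List.isChain_iff_getElem.mp h i hi h')) hne.symm

theorem ascentsStartAtOne_append_one_cons {A B : List ℕ} (hA : A.SortedGT) (hB : B.SortedGT)
    (hA2 : ∀ a ∈ A, 2 ≤ a) : AscentsStartAtOne (A ++ 1 :: B) := by
  refine List.isChain_append.mpr ⟨?_, List.isChain_cons.mpr ⟨fun _ _ _ => rfl, ?_⟩, ?_⟩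
  · exact (List.sortedGT_iff_isChain.mp hA).imp fun a b hab hlt => absurd hab hlt.not_gt
  · exact (List.sortedGT_iff_isChain.mp hB).imp fun a b hab hlt => absurd hab hlt.not_gt
  · intro x hx y hy hxy
    have := hA2 x (List.mem_of_getLast? hx)
    simp only [List.head?_cons, Option.mem_def, Option.some.injEq] at hy
    omega

section ValleyPerm

noncomputable def valleyPerm (n : ℕ) (s : Finset ℕ) : List ℕ :=
  s.sort (· ≥ ·) ++ 1 :: (Finset.Icc 2 n \ s).sort (· ≥ ·)

variable {n : ℕ} {s : Finset ℕ}

theorem isPermList_valleyPerm (hn : 1 ≤ n) (hs : s ⊆ Finset.Icc 2 n) :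
    IsPermList n (valleyPerm n s) := by
  have hs' : ∀ x ∈ s, 2 ≤ x ∧ x ≤ n := fun x hx => Finset.mem_Icc.mp (hs hx)
  refine isPermList_iff.mpr ⟨?_, fun x => ?_⟩
  · refine List.nodup_append.mpr ⟨Finset.sort_nodup _ _,
      List.nodup_cons.mpr ⟨by simp, Finset.sort_nodup _ _⟩, ?_⟩
    simp only [Finset.mem_sort, List.mem_cons, Finset.mem_sdiff]
    rintro _ ha b (rfl | ⟨-, hb⟩) rfl
    · exact absurd (hs' _ ha).1 (by norm_num)
    · exact hb ha
  · simp only [valleyPerm, List.mem_append, Finset.mem_sort, List.mem_cons, Finset.mem_sdiff,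
      Finset.mem_Icc]
    have := hs' x
    by_cases hx : x ∈ s <;> simp [hx] at this ⊢ <;> omega

theorem ascentsStartAtOne_valleyPerm (hs : s ⊆ Finset.Icc 2 n) :
    AscentsStartAtOne (valleyPerm n s) :=
  ascentsStartAtOne_append_one_cons (Finset.sortedGT_sort _) (Finset.sortedGT_sort _)
    fun _ ha => (Finset.mem_Icc.mp (hs ((Finset.mem_sort _).mp ha))).1

theorem takeWhile_valleyPerm (hs : s ⊆ Finset.Icc 2 n) :
    (valleyPerm n s).takeWhile (· != 1) = s.sort (· ≥ ·) := by
  have hs1 : ∀ a ∈ s.sort (· ≥ ·), (a != 1) = true := fun a ha => by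
    have := (Finset.mem_Icc.mp (hs ((Finset.mem_sort _).mp ha))).1
    simp only [bne_iff_ne]
    omega
  simp [valleyPerm, List.takeWhile_append_of_pos hs1]

theorem valleyPerm_injOn : Set.InjOn (valleyPerm n) (Finset.Icc 2 n).powerset := by
  intro s hs t ht hst
  have := congrArg (fun l => (l.takeWhile (· != 1)).toFinset) hst
  simpa only [takeWhile_valleyPerm (Finset.mem_powerset.mp hs),
    takeWhile_valleyPerm (Finset.mem_powerset.mp ht), Finset.sort_toFinset] using this

theorem exists_valleyPerm_eq {π : List ℕ} (hn : 1 ≤ n) (hπ : IsPermList n π)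
    (hasc : AscentsStartAtOne π) : ∃ s ⊆ Finset.Icc 2 n, valleyPerm n s = π := by
  obtain ⟨A, B, rfl⟩ := List.append_of_mem (hπ.mem_iff.mpr ⟨le_rfl, hn⟩)
  obtain ⟨hA, hB, hAB⟩ := List.nodup_append.mp hπ.nodup
  have h1A : 1 ∉ A := fun h => hAB 1 h 1 List.mem_cons_self rfl
  have h1B : 1 ∉ B := (List.nodup_cons.mp hB).1
  have hBA : ∀ x ∈ B, x ∉ A := fun x hxB hxA => hAB x hxA x (List.mem_cons_of_mem _ hxB) rfl
  have hmem : ∀ x, x ∈ A ∨ x = 1 ∨ x ∈ B ↔ 1 ≤ x ∧ x ≤ n := fun x => by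
    simpa only [List.mem_append, List.mem_cons] using hπ.mem_iff (x := x)
  obtain ⟨hascA, hascB, -⟩ := List.isChain_append.mp hasc
  have hsA : A.toFinset.sort (· ≥ ·) = A :=
    (Finset.sortedGT_sort _).eq_of_mem_iff (AscentsStartAtOne.sortedGT hascA hA h1A) (by simp)
  have hsB : (Finset.Icc 2 n \ A.toFinset).sort (· ≥ ·) = B := by
    refine (Finset.sortedGT_sort _).eq_of_mem_iff
      (AscentsStartAtOne.sortedGT hascB.tail (List.nodup_cons.mp hB).2 h1B) fun x => ?_
    simp only [Finset.mem_sort, Finset.mem_sdiff, Finset.mem_Icc, List.mem_toFinset]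
    constructor
    · rintro ⟨hx, hxA⟩
      rcases (hmem x).mpr ⟨by omega, hx.2⟩ with hx' | rfl | hxB
      · exact absurd hx' hxA
      · omega
      · exact hxB
    · intro hxB
      have := (hmem x).mp (Or.inr (Or.inr hxB))
      have : x ≠ 1 := fun h => h1B (h ▸ hxB)
      exact ⟨by omega, hBA x hxB⟩
  refine ⟨A.toFinset, fun x hx => ?_, by rw [valleyPerm, hsA, hsB]⟩
  rw [List.mem_toFinset] at hx
  have := (hmem x).mp (Or.inl hx)
  have : x ≠ 1 := fun h => h1A (h ▸ hx)
  rw [Finset.mem_Icc]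
  omega

theorem fishburnSet_123_eq_image (hn : 1 ≤ n) :
    FishburnSet n [[1, 2, 3]] = valleyPerm n '' (Finset.Icc 2 n).powerset := by
  ext π
  rw [mem_fishburnSet_123_iff]
  constructor
  · rintro ⟨hπ, hasc⟩
    obtain ⟨s, hs, rfl⟩ := exists_valleyPerm_eq hn hπ hasc
    exact ⟨s, Finset.mem_powerset.mpr hs, rfl⟩
  · rintro ⟨s, hs, rfl⟩
    have hs := Finset.mem_powerset.mp hs
    exact ⟨isPermList_valleyPerm hn hs, ascentsStartAtOne_valleyPerm hs⟩

theorem ncard_fishburnSet_123 (hn : 1 ≤ n) :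
    (FishburnSet n [[1, 2, 3]]).ncard = 2 ^ (n - 1) := by
  rw [fishburnSet_123_eq_image hn, valleyPerm_injOn.ncard_image, Set.ncard_coe_finset,
    Finset.card_powerset, Nat.card_Icc]
  congr 1

end ValleyPerm

theorem stmt11 (σ : List ℕ) (hu : Unrestrictive σ) :
    (∀ n : ℕ, FishburnSet n [[1, 2, 3], σ] = FishburnSet n [[1, 2, 3]]) ∧
      ∀ n : ℕ, 1 ≤ n → (FishburnSet n [[1, 2, 3], σ]).ncard = 2 ^ (n - 1) := by
  have hσ := fishburnSet_123_eq_of_hasDisjointRises hu.hasDisjointRises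
  exact ⟨hσ, fun n hn => (hσ n).symm ▸ ncard_fishburnSet_123 hn⟩
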